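/- arXiv:1906.07902 — 2 statements merged into one kernel-verified Lean document; each statement's English description precedes it below -/
import Mathlib

section
/- Let A ∈ {0,1} and Z be jointly distributed random variables, and let H* := H(A | Z) be the conditional Shannon entropy of A given Z (in bits). Then for any (possibly randomized) adversary Â : Z → {0,1} such that Â is conditionally independent of A given Z, the inference error satisfies Pr(Â ≠ A) ≥ H* / (2 log₂(6 / H*)). -/
open MeasureTheory ProbabilityTheory
open scoped ENNReal

/-- Binary entropy in bits (base-2 logarithm, with the convention `0 logb 0 = 0`). -/
noncomputable def binEnt2 (p : ℝ) : ℝ :=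
  -(p * Real.logb 2 p) - (1 - p) * Real.logb 2 (1 - p)

/-- Conditional Shannon entropy `H(A | Z)` (in bits) of the binary attribute `A`
given the discrete representation `Z`. -/
noncomputable def condEnt2 {Ω 𝒵 : Type*} [MeasurableSpace Ω] (μ : Measure Ω)
    (A : Ω → Bool) (Z : Ω → 𝒵) : ℝ :=
  ∑' z : 𝒵, (μ {ω | Z ω = z}).toReal *
    binEnt2 ((ProbabilityTheory.cond μ {ω | Z ω = z}) {ω | A ω = true}).toReal

/-!
Put `m(z) = min (P(A = 1, Z = z), P(A = 0, Z = z))` and `M = ∑ m(z)`. Conditional independence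
gives `m(z) P(Z = z) ≤ P(A = 1, Z = z) P(Â = 0, Z = z) + P(A = 0, Z = z) P(Â = 1, Z = z)
= P(Â ≠ A, Z = z) P(Z = z)`, hence `M ≤ Pr(Â ≠ A)`.

The tangent line of the concave function `-x log x` at `ε` gives `-x log x ≤ x log ε⁻¹ + ε - x`, and
with `-(1 - x) log (1 - x) ≤ x` this bounds the binary entropy (in nats) by
`min (p, 1 - p) log ε⁻¹ + ε`. Summing over the fibres of `Z`, `H* log 2 ≤ M log ε⁻¹ + ε` for every
`ε > 0`. For `ε = t := H* / (2 log₂ (6 / H*))` an elementary computation gives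
`t log t⁻¹ + t ≤ H* log 2`, and since `log t⁻¹ > 0` this forces `t ≤ M ≤ Pr(Â ≠ A)`.
-/

open Real

lemma Real.negMulLog_le_mul_log_inv_add {x ε : ℝ} (hx : 0 ≤ x) (hε : 0 < ε) :
    negMulLog x ≤ x * log ε⁻¹ + (ε - x) := by
  have hscaled := negMulLog_le_one_sub_self (div_nonneg hx hε.le)
  calc negMulLog x = ε * negMulLog (x / ε) + x / ε * negMulLog ε := by
        rw [← negMulLog_mul, div_mul_cancel₀ x hε.ne']
    _ ≤ ε * (1 - x / ε) + x * log ε⁻¹ := by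
        have hε_term : x / ε * negMulLog ε = x * log ε⁻¹ := by
          rw [negMulLog, log_inv]; field_simp
        rw [hε_term]
        gcongr
    _ = x * log ε⁻¹ + (ε - x) := by field_simp; ring

lemma Real.binEntropy_le_mul_log_inv_add {p ε : ℝ} (hp₀ : 0 ≤ p) (hp₁ : p ≤ 1) (hε : 0 < ε) :
    binEntropy p ≤ p * log ε⁻¹ + ε := by
  rw [binEntropy_eq_negMulLog_add_negMulLog_one_sub]
  linarith [negMulLog_le_mul_log_inv_add hp₀ hε, negMulLog_le_one_sub_self (sub_nonneg.2 hp₁)]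

lemma Real.binEntropy_le_min_mul_log_inv_add {p ε : ℝ} (hp₀ : 0 ≤ p) (hp₁ : p ≤ 1) (hε : 0 < ε) :
    binEntropy p ≤ min p (1 - p) * log ε⁻¹ + ε := by
  rcases min_choice p (1 - p) with h | h <;> rw [h]
  · exact binEntropy_le_mul_log_inv_add hp₀ hp₁ hε
  · rw [← binEntropy_one_sub]
    exact binEntropy_le_mul_log_inv_add (by linarith) (by linarith) hε

lemma binEnt2_mul_log_two (p : ℝ) : binEnt2 p * log 2 = binEntropy p := by
  simp only [binEnt2, binEntropy, logb, log_inv]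
  field_simp
  ring

lemma Real.log_le_sub_one_mul_log_two {x : ℝ} (hx : 2 ≤ x) : log x ≤ (x - 1) * log 2 := by
  have hhalf := log_le_sub_one_of_pos (show 0 < x / 2 by positivity)
  rw [log_div (by positivity) two_ne_zero] at hhalf
  nlinarith [log_two_gt_d9]

lemma Real.one_le_log_six : 1 ≤ log 6 := by
  rw [le_log_iff_exp_le (by norm_num)]
  linarith [exp_one_lt_d9]

lemma two_le_logb_six_div {H : ℝ} (hH₀ : 0 < H) (hH₁ : H ≤ 1) : 2 ≤ logb 2 (6 / H) := by
  rw [le_logb_iff_rpow_le one_lt_two (by positivity), le_div_iff₀ hH₀]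
  norm_num
  linarith

lemma mul_log_inv_add_self_le_mul_log_two {H t : ℝ} (hH₀ : 0 < H) (hH₁ : H ≤ 1)
    (ht : t = H / (2 * logb 2 (6 / H))) : t * log t⁻¹ + t ≤ H * log 2 := by
  set L := logb 2 (6 / H) with hL
  have hL2 : 2 ≤ L := two_le_logb_six_div hH₀ hH₁
  have hlog2 : 0 < log 2 := by positivity
  have hlogL : log (6 / H) = L * log 2 := by rw [hL, logb, div_mul_cancel₀ _ hlog2.ne']
  have hlogt : log t⁻¹ = log 2 + log L + log (6 / H) - log 6 := by
    rw [ht, inv_div, log_div (by positivity) hH₀.ne', log_mul two_ne_zero (by positivity),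
      log_div (by norm_num) hH₀.ne']
    ring
  have key : log 2 + log L + 1 ≤ log (6 / H) + log 6 := by
    nlinarith [log_le_sub_one_mul_log_two hL2, one_le_log_six]
  rw [hlogt, ht, ← mul_add_one, div_mul_eq_mul_div, div_le_iff₀ (by positivity)]
  nlinarith

section Measure

variable {Ω : Type*} [MeasurableSpace Ω] {μ : Measure Ω}

lemma measure_true_inter_add_false_inter {B : Ω → Bool} (hB : Measurable B) (s : Set Ω) :
    μ ({ω | B ω = true} ∩ s) + μ ({ω | B ω = false} ∩ s) = μ s := by
  have hfalse : {ω | B ω = false} = {ω | B ω = true}ᶜ := by ext; simp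
  rw [hfalse, Set.inter_comm, Set.inter_comm _ s, ← Set.sdiff_eq]
  exact measure_inter_add_sdiff s (hB (measurableSet_singleton true))

lemma min_measure_le_measure_ne_inter [IsFiniteMeasure μ] {A Ahat : Ω → Bool}
    (hA : Measurable A) (hAhat : Measurable Ahat) {s : Set Ω} (hs : MeasurableSet s)
    (hci : ∀ a b : Bool, μ ({ω | A ω = a} ∩ ({ω | Ahat ω = b} ∩ s)) * μ s
      = μ ({ω | A ω = a} ∩ s) * μ ({ω | Ahat ω = b} ∩ s)) :
    min (μ ({ω | A ω = true} ∩ s)) (μ ({ω | A ω = false} ∩ s))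
      ≤ μ ({ω | Ahat ω ≠ A ω} ∩ s) := by
  obtain hs0 | hs0 := eq_or_ne (μ s) 0
  · simp [measure_mono_null Set.inter_subset_right hs0]
  have herr : μ ({ω | Ahat ω ≠ A ω} ∩ s)
      = μ ({ω | A ω = true} ∩ ({ω | Ahat ω = false} ∩ s))
        + μ ({ω | A ω = false} ∩ ({ω | Ahat ω = true} ∩ s)) := by
    have hmeas : MeasurableSet ({ω | A ω = false} ∩ ({ω | Ahat ω = true} ∩ s)) :=
      (hA (measurableSet_singleton _)).inter ((hAhat (measurableSet_singleton _)).inter hs)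
    rw [← measure_union _ hmeas]
    · congr 1
      ext ω
      simp only [Set.mem_inter_iff, Set.mem_union, Set.mem_ofPred_eq]
      cases A ω <;> cases Ahat ω <;> simp
    · rw [Set.disjoint_left]
      rintro ω ⟨h1, -⟩ ⟨h2, -⟩
      simp_all
  set m := min (μ ({ω | A ω = true} ∩ s)) (μ ({ω | A ω = false} ∩ s))
  rw [← ENNReal.mul_le_mul_iff_left hs0 (measure_ne_top μ s)]
  calc m * μ s = m * μ ({ω | Ahat ω = false} ∩ s) + m * μ ({ω | Ahat ω = true} ∩ s) := by
        rw [← mul_add, add_comm, measure_true_inter_add_false_inter hAhat]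
    _ ≤ μ ({ω | A ω = true} ∩ s) * μ ({ω | Ahat ω = false} ∩ s)
        + μ ({ω | A ω = false} ∩ s) * μ ({ω | Ahat ω = true} ∩ s) := by
        gcongr
        exacts [min_le_left _ _, min_le_right _ _]
    _ = μ ({ω | Ahat ω ≠ A ω} ∩ s) * μ s := by
        rw [← hci, ← hci, herr, add_mul]


lemma toReal_mul_binEntropy_cond_le [IsFiniteMeasure μ] {A : Ω → Bool} (hA : Measurable A)
    {s : Set Ω} (hs : MeasurableSet s) {ε : ℝ} (hε : 0 < ε) :
    (μ s).toReal * binEntropy (μ[{ω | A ω = true} | s]).toReal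
      ≤ (min (μ ({ω | A ω = true} ∩ s)) (μ ({ω | A ω = false} ∩ s))).toReal * log ε⁻¹
        + (μ s).toReal * ε := by
  set p := (μ[{ω | A ω = true} | s]).toReal
  have htrue : (μ s).toReal * p = (μ ({ω | A ω = true} ∩ s)).toReal := by
    rw [mul_comm, ← ENNReal.toReal_mul, cond_mul_eq_inter hs, Set.inter_comm]
  have hfalse : (μ s).toReal * (1 - p) = (μ ({ω | A ω = false} ∩ s)).toReal := by
    rw [mul_one_sub, htrue, ← measure_true_inter_add_false_inter hA s,
      ENNReal.toReal_add (measure_ne_top _ _) (measure_ne_top _ _)]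
    ring
  calc (μ s).toReal * binEntropy p ≤ (μ s).toReal * (min p (1 - p) * log ε⁻¹ + ε) := by
        gcongr
        exact binEntropy_le_min_mul_log_inv_add ENNReal.toReal_nonneg measureReal_le_one hε
    _ = min ((μ s).toReal * p) ((μ s).toReal * (1 - p)) * log ε⁻¹ + (μ s).toReal * ε := by
        rw [← mul_min_of_nonneg _ _ ENNReal.toReal_nonneg]
        ring
    _ = _ := by rw [htrue, hfalse, ENNReal.toReal_min (measure_ne_top _ _) (measure_ne_top _ _)]

end Measure

/-- For countable `𝒵` this is the error of the Bayes-optimal guess of `A` from `Z`. -/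
noncomputable def bayesError {Ω 𝒵 : Type*} [MeasurableSpace Ω] (μ : Measure Ω) (A : Ω → Bool)
    (Z : Ω → 𝒵) : ℝ≥0∞ :=
  ∑' z, min (μ ({ω | A ω = true} ∩ {ω | Z ω = z})) (μ ({ω | A ω = false} ∩ {ω | Z ω = z}))

section Fibers

variable {Ω 𝒵 : Type*} [MeasurableSpace Ω] [MeasurableSpace 𝒵] [MeasurableSingletonClass 𝒵]
  {μ : Measure Ω} {A : Ω → Bool} {Z : Ω → 𝒵}

lemma bayesError_le_measure_ne [IsFiniteMeasure μ] {Ahat : Ω → Bool}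
    (hA : Measurable A) (hAhat : Measurable Ahat) (hZ : Measurable Z)
    (hcondindep : ∀ (z : 𝒵) (a b : Bool),
      μ {ω | A ω = a ∧ Ahat ω = b ∧ Z ω = z} * μ {ω | Z ω = z}
        = μ {ω | A ω = a ∧ Z ω = z} * μ {ω | Ahat ω = b ∧ Z ω = z}) :
    bayesError μ A Z ≤ μ {ω | Ahat ω ≠ A ω} := by
  have hfiber (z : 𝒵) : MeasurableSet {ω | Z ω = z} := hZ (measurableSet_singleton z)
  have hne : MeasurableSet {ω | Ahat ω ≠ A ω} := (measurableSet_eq_fun hAhat hA).compl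
  calc bayesError μ A Z ≤ ∑' z, μ ({ω | Ahat ω ≠ A ω} ∩ {ω | Z ω = z}) :=
        ENNReal.tsum_le_tsum fun z ↦
          min_measure_le_measure_ne_inter hA hAhat (hfiber z) (hcondindep z)
    _ ≤ μ (⋃ z, {ω | Ahat ω ≠ A ω} ∩ {ω | Z ω = z}) :=
        tsum_meas_le_meas_iUnion_of_disjoint μ (fun z ↦ hne.inter (hfiber z))
          fun _ _ hij ↦ (pairwise_disjoint_fiber Z hij).mono Set.inter_subset_right
            Set.inter_subset_right
    _ ≤ μ {ω | Ahat ω ≠ A ω} := measure_mono (Set.iUnion_subset fun _ ↦ Set.inter_subset_left)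

lemma condEnt2_mul_log_two_le [IsProbabilityMeasure μ] (hA : Measurable A) (hZ : Measurable Z)
    {ε : ℝ} (hε : 0 < ε) : condEnt2 μ A Z * log 2 ≤ (bayesError μ A Z).toReal * log ε⁻¹ + ε := by
  have hfiber (z : 𝒵) : MeasurableSet {ω | Z ω = z} := hZ (measurableSet_singleton z)
  set ν : 𝒵 → ℝ := fun z ↦ (μ {ω | Z ω = z}).toReal
  set m : 𝒵 → ℝ≥0∞ := fun z ↦
    min (μ ({ω | A ω = true} ∩ {ω | Z ω = z})) (μ ({ω | A ω = false} ∩ {ω | Z ω = z}))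
  set p : 𝒵 → ℝ := fun z ↦ (μ[{ω | A ω = true} | {ω | Z ω = z}]).toReal
  have hν_le : ∑' z, μ {ω | Z ω = z} ≤ 1 :=
    (tsum_meas_le_meas_iUnion_of_disjoint μ hfiber (pairwise_disjoint_fiber Z)).trans prob_le_one
  have hm_le : bayesError μ A Z ≤ 1 :=
    (ENNReal.tsum_le_tsum fun z ↦ (min_le_left _ _).trans
      (measure_mono Set.inter_subset_right)).trans hν_le
  have hν : Summable ν := ENNReal.summable_toReal (ne_top_of_le_ne_top ENNReal.one_ne_top hν_le)
  have hm : Summable fun z ↦ (m z).toReal :=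
    ENNReal.summable_toReal (ne_top_of_le_ne_top ENNReal.one_ne_top hm_le)
  have hν_sum : ∑' z, ν z ≤ 1 := by
    rw [← ENNReal.tsum_toReal_eq fun _ ↦ measure_ne_top _ _]
    simpa using ENNReal.toReal_mono ENNReal.one_ne_top hν_le
  have hm_sum : ∑' z, (m z).toReal = (bayesError μ A Z).toReal :=
    (ENNReal.tsum_toReal_eq fun _ ↦ ne_top_of_le_ne_top (measure_ne_top _ _) (min_le_left _ _)).symm
  have hterm (z : 𝒵) : ν z * binEntropy (p z) ≤ (m z).toReal * log ε⁻¹ + ν z * ε :=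
    toReal_mul_binEntropy_cond_le hA (hfiber z) hε
  have hnonneg (z : 𝒵) : 0 ≤ ν z * binEntropy (p z) :=
    mul_nonneg ENNReal.toReal_nonneg (binEntropy_nonneg ENNReal.toReal_nonneg measureReal_le_one)
  have hbound : Summable fun z ↦ (m z).toReal * log ε⁻¹ + ν z * ε :=
    (hm.mul_right _).add (hν.mul_right _)
  calc condEnt2 μ A Z * log 2 = ∑' z, ν z * binEntropy (p z) := by
        simp only [condEnt2, ← tsum_mul_right, mul_assoc, binEnt2_mul_log_two]
        rfl
    _ ≤ ∑' z, ((m z).toReal * log ε⁻¹ + ν z * ε) :=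
        (Summable.of_nonneg_of_le hnonneg hterm hbound).tsum_le_tsum hterm hbound
    _ = (bayesError μ A Z).toReal * log ε⁻¹ + (∑' z, ν z) * ε := by
        rw [(hm.mul_right _).tsum_add (hν.mul_right _), tsum_mul_right, tsum_mul_right, hm_sum]
    _ ≤ (bayesError μ A Z).toReal * log ε⁻¹ + ε := by
        gcongr
        exact mul_le_of_le_one_left hε.le hν_sum

end Fibers

theorem adversary_error_lower_bound_general
    {Ω 𝒵 : Type*} [MeasurableSpace Ω] [MeasurableSpace 𝒵]
    [MeasurableSingletonClass 𝒵]
    (μ : Measure Ω) [IsProbabilityMeasure μ]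
    (A Ahat : Ω → Bool) (Z : Ω → 𝒵)
    (hA : Measurable A) (hAhat : Measurable Ahat) (hZ : Measurable Z)
    (hcondindep : ∀ (z : 𝒵) (a b : Bool),
      μ {ω | A ω = a ∧ Ahat ω = b ∧ Z ω = z} * μ {ω | Z ω = z}
        = μ {ω | A ω = a ∧ Z ω = z} * μ {ω | Ahat ω = b ∧ Z ω = z})
    (hpos : 0 < condEnt2 μ A Z) (hle : condEnt2 μ A Z ≤ 1) :
    condEnt2 μ A Z / (2 * Real.logb 2 (6 / condEnt2 μ A Z))
      ≤ (μ {ω | Ahat ω ≠ A ω}).toReal := by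
  set H := condEnt2 μ A Z
  set t := H / (2 * logb 2 (6 / H)) with ht
  have hL := two_le_logb_six_div hpos hle
  have ht_pos : 0 < t := by positivity
  have hlog_pos : 0 < log t⁻¹ := by
    refine log_pos (one_lt_inv_iff₀.2 ⟨ht_pos, ?_⟩)
    rw [ht, div_lt_one (by positivity)]
    linarith
  have hupper := condEnt2_mul_log_two_le (μ := μ) hA hZ ht_pos
  have hlower := mul_log_inv_add_self_le_mul_log_two hpos hle ht
  have ht_le : t ≤ (bayesError μ A Z).toReal :=
    le_of_mul_le_mul_right (by linarith) hlog_pos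
  exact ht_le.trans <| ENNReal.toReal_mono (measure_ne_top _ _)
    (bayesError_le_measure_ne hA hAhat hZ hcondindep)

/-- for any (possibly randomized) adversary `Â` that is conditionally
independent of `A` given `Z`, with `H* := H(A | Z)` in bits satisfying `0 < H* ≤ 1`,
the inference error satisfies `Pr(Â ≠ A) ≥ H* / (2 log₂(6 / H*))`. -/
theorem adversary_error_lower_bound
    {Ω 𝒵 : Type*} [MeasurableSpace Ω] [MeasurableSpace 𝒵]
    [MeasurableSingletonClass 𝒵] [Countable 𝒵]
    (μ : Measure Ω) [IsProbabilityMeasure μ]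
    (A Ahat : Ω → Bool) (Z : Ω → 𝒵)
    (hA : Measurable A) (hAhat : Measurable Ahat) (hZ : Measurable Z)
    (hcondindep : ∀ (z : 𝒵) (a b : Bool),
      μ {ω | A ω = a ∧ Ahat ω = b ∧ Z ω = z} * μ {ω | Z ω = z}
        = μ {ω | A ω = a ∧ Z ω = z} * μ {ω | Ahat ω = b ∧ Z ω = z})
    (hpos : 0 < condEnt2 μ A Z) (hle : condEnt2 μ A Z ≤ 1) :
    condEnt2 μ A Z / (2 * Real.logb 2 (6 / condEnt2 μ A Z))
      ≤ (μ {ω | Ahat ω ≠ A ω}).toReal :=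
  adversary_error_lower_bound_general μ A Ahat Z hA hAhat hZ hcondindep hpos hle
end

section
/- Let A ∈ {0,1} and Z be jointly distributed random variables, and let Â be any {0,1}-valued random variable with A conditionally independent of Â given Z. Then Pr(A ≠ Â) ≥ H₂⁻¹( H(A | Z) ), where H₂⁻¹ is the inverse of the binary entropy function restricted to [0, 1/2]. -/
/-!
Given `Z = z`, conditional independence makes the error of `Ahat` at least the Bayes error
`min p_z (1 - p_z)`, where `p_z = P(A = 1 | Z = z)`; averaging over `Z`, the mean Bayes error `e`
is at most `P(A ≠ Ahat)`, and `e ≤ 1/2`. Since `H₂ p = H₂ (min p (1 - p))` and `H₂` is concave,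
Jensen's inequality gives `H(A | Z) ≤ H₂ e`, so `H₂⁻¹ (H(A | Z)) ≤ e` by the intermediate value
theorem.
-/

open MeasureTheory ProbabilityTheory
open scoped ENNReal

/-- The inverse of the binary entropy function `H₂ : [0, 1/2] → [0, 1]`. -/
noncomputable def invBinEnt2 (s : ℝ) : ℝ :=
  sInf {p : ℝ | p ∈ Set.Icc (0:ℝ) (1/2) ∧ binEnt2 p = s}

open Set

lemma binEnt2_eq_binEntropy_div (p : ℝ) : binEnt2 p = Real.binEntropy p / Real.log 2 := by
  simp only [binEnt2, Real.binEntropy, Real.logb, Real.log_inv]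
  ring

lemma binEnt2_min_one_sub (p : ℝ) : binEnt2 (min p (1 - p)) = binEnt2 p := by
  rcases min_choice p (1 - p) with h | h <;> rw [h]
  simp only [binEnt2_eq_binEntropy_div, Real.binEntropy_one_sub]

lemma binEnt2_nonneg {p : ℝ} (h₀ : 0 ≤ p) (h₁ : p ≤ 1) : 0 ≤ binEnt2 p := by
  rw [binEnt2_eq_binEntropy_div]
  exact div_nonneg (Real.binEntropy_nonneg h₀ h₁) (Real.log_nonneg one_le_two)

lemma continuous_binEnt2 : Continuous binEnt2 := by
  simp only [funext binEnt2_eq_binEntropy_div]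
  fun_prop

lemma concaveOn_binEnt2 : ConcaveOn ℝ (Icc 0 1) binEnt2 := by
  simp only [funext binEnt2_eq_binEntropy_div, div_eq_inv_mul]
  exact Real.strictConcave_binEntropy.concaveOn.smul (inv_nonneg.2 (Real.log_nonneg one_le_two))

lemma invBinEnt2_le {s t : ℝ} (ht : t ∈ Icc 0 (1 / 2)) (hs₀ : 0 ≤ s) (hs : s ≤ binEnt2 t) :
    invBinEnt2 s ≤ t := by
  obtain ⟨p, hp, rfl⟩ : s ∈ binEnt2 '' Icc 0 t :=
    intermediate_value_Icc ht.1 continuous_binEnt2.continuousOn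
      ⟨by simpa [binEnt2] using hs₀, hs⟩
  exact (csInf_le ⟨0, fun x hx => hx.1.1⟩ ⟨⟨hp.1, hp.2.trans ht.2⟩, rfl⟩ :
    invBinEnt2 (binEnt2 p) ≤ p).trans hp.2

section Measure

variable {Ω : Type*} [MeasurableSpace Ω] {μ : Measure Ω} [IsFiniteMeasure μ]

lemma measureReal_true_add_false {X : Ω → Bool} (hX : Measurable X) (s : Set Ω) :
    μ.real {ω | X ω = true ∧ ω ∈ s} + μ.real {ω | X ω = false ∧ ω ∈ s} = μ.real s := by
  rw [← measureReal_inter_add_sdiff (s := s) (hX (measurableSet_singleton true))]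
  congr 2 <;> ext ω <;> simp only [mem_ofPred_eq, mem_inter_iff, mem_sdiff, mem_preimage,
    mem_singleton_iff] <;> cases X ω <;> simp [and_comm]

lemma min_measureReal_le_measureReal_ne_of_condIndep {A Ahat : Ω → Bool}
    (hA : Measurable A) (hAhat : Measurable Ahat) {W : Set Ω}
    (hindep : ∀ a b : Bool, μ {ω | A ω = a ∧ Ahat ω = b ∧ ω ∈ W} * μ W
      = μ {ω | A ω = a ∧ ω ∈ W} * μ {ω | Ahat ω = b ∧ ω ∈ W}) :
    min (μ.real {ω | A ω = true ∧ ω ∈ W}) (μ.real {ω | A ω = false ∧ ω ∈ W})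
      ≤ μ.real {ω | A ω ≠ Ahat ω ∧ ω ∈ W} := by
  have hindep' : ∀ a b : Bool, μ.real {ω | A ω = a ∧ Ahat ω = b ∧ ω ∈ W} * μ.real W
      = μ.real {ω | A ω = a ∧ ω ∈ W} * μ.real {ω | Ahat ω = b ∧ ω ∈ W} := fun a b => by
    simpa only [measureReal_def, ENNReal.toReal_mul] using congrArg ENNReal.toReal (hindep a b)
  have hAW := measureReal_true_add_false (μ := μ) hA W
  have hAhatW := measureReal_true_add_false (μ := μ) hAhat W
  have herr : μ.real {ω | A ω ≠ Ahat ω ∧ ω ∈ W} = μ.real {ω | A ω = true ∧ Ahat ω = false ∧ ω ∈ W}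
      + μ.real {ω | A ω = false ∧ Ahat ω = true ∧ ω ∈ W} := by
    rw [← measureReal_true_add_false hA]
    congr 2 <;> ext ω <;> simp only [mem_ofPred_eq] <;> cases A ω <;> cases Ahat ω <;> simp
  rcases measureReal_nonneg.eq_or_lt with hW | hW
  · calc min _ _ ≤ μ.real {ω | A ω = true ∧ ω ∈ W} := min_le_left _ _
      _ ≤ μ.real W := by linarith [measureReal_nonneg (μ := μ) (s := {ω | A ω = false ∧ ω ∈ W})]
      _ ≤ _ := hW ▸ measureReal_nonneg
  refine le_of_mul_le_mul_right ?_ hW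
  -- conditional independence factors `μ(A ≠ Ahat, W) * μ W` into the two products below
  calc min (μ.real {ω | A ω = true ∧ ω ∈ W}) (μ.real {ω | A ω = false ∧ ω ∈ W}) * μ.real W
      = min (μ.real {ω | A ω = true ∧ ω ∈ W}) (μ.real {ω | A ω = false ∧ ω ∈ W})
          * (μ.real {ω | Ahat ω = true ∧ ω ∈ W} + μ.real {ω | Ahat ω = false ∧ ω ∈ W}) := by
        rw [hAhatW]
    _ ≤ μ.real {ω | A ω = false ∧ ω ∈ W} * μ.real {ω | Ahat ω = true ∧ ω ∈ W}
          + μ.real {ω | A ω = true ∧ ω ∈ W} * μ.real {ω | Ahat ω = false ∧ ω ∈ W} := by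
        rw [mul_add]
        gcongr
        exacts [min_le_right _ _, min_le_left _ _]
    _ = μ.real {ω | A ω ≠ Ahat ω ∧ ω ∈ W} * μ.real W := by
        rw [← hindep', ← hindep', herr]
        ring

end Measure

section Discrete

variable {Ω 𝒵 : Type*} [MeasurableSpace Ω] [MeasurableSpace 𝒵] [MeasurableSingletonClass 𝒵]
  [Countable 𝒵] {μ : Measure Ω} {Z : Ω → 𝒵}

lemma hasSum_measureReal_inter_preimage_singleton [IsFiniteMeasure μ] (hZ : Measurable Z)
    (s : Set Ω) : HasSum (fun z => μ.real (s ∩ Z ⁻¹' {z})) (μ.real s) := by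
  have h : ∑' z, μ (s ∩ Z ⁻¹' {z}) = μ s := by
    have := tsum_measure_preimage_singleton (μ := μ.restrict s) countable_univ
      fun z _ => hZ (measurableSet_singleton z)
    rw [tsum_univ (f := fun z => μ.restrict s (Z ⁻¹' {z}))] at this
    simpa [Measure.restrict_apply (hZ (measurableSet_singleton _)), inter_comm] using this
  have := ENNReal.hasSum_toReal (h ▸ measure_ne_top μ s)
  rwa [← ENNReal.tsum_toReal_eq fun _ => measure_ne_top μ _, h] at this

lemma integral_map_eq_tsum (hZ : Measurable Z) {g : 𝒵 → ℝ} (hg : Integrable g (μ.map Z)) :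
    ∫ z, g z ∂(μ.map Z) = ∑' z, μ.real (Z ⁻¹' {z}) * g z := by
  simp only [integral_countable hg, smul_eq_mul,
    map_measureReal_apply hZ (measurableSet_singleton _)]

end Discrete

/-- The error probability of the Bayes classifier of `A` given `Z = z`. -/
noncomputable def bayesErrorAt {Ω 𝒵 : Type*} [MeasurableSpace Ω] (μ : Measure Ω)
    (A : Ω → Bool) (Z : Ω → 𝒵) (z : 𝒵) : ℝ :=
  min (μ[{ω | A ω = true} | {ω | Z ω = z}]).toReal
    (1 - (μ[{ω | A ω = true} | {ω | Z ω = z}]).toReal)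

section BayesError

variable {Ω 𝒵 : Type*} [MeasurableSpace Ω] {μ : Measure Ω} {A : Ω → Bool} {Z : Ω → 𝒵}

lemma bayesErrorAt_mem_Icc (z : 𝒵) : bayesErrorAt μ A Z z ∈ Icc 0 (1 / 2) := by
  have h : (μ[{ω | A ω = true} | {ω | Z ω = z}]).toReal ≤ 1 := measureReal_le_one
  constructor
  · exact le_min ENNReal.toReal_nonneg (by linarith)
  · rw [bayesErrorAt]
    rcases le_total (μ[{ω | A ω = true} | {ω | Z ω = z}]).toReal (1 / 2) with h' | h'
    · exact min_le_of_left_le h'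
    · exact min_le_of_right_le (by linarith)

variable [MeasurableSpace 𝒵] [MeasurableSingletonClass 𝒵]

lemma measureReal_mul_bayesErrorAt [IsFiniteMeasure μ] (hA : Measurable A) (hZ : Measurable Z)
    (z : 𝒵) :
    μ.real {ω | Z ω = z} * bayesErrorAt μ A Z z
      = min (μ.real {ω | A ω = true ∧ Z ω = z}) (μ.real {ω | A ω = false ∧ Z ω = z}) := by
  have hW : MeasurableSet {ω | Z ω = z} := hZ (measurableSet_singleton z)
  have htrue : μ.real {ω | Z ω = z} * (μ[{ω | A ω = true} | {ω | Z ω = z}]).toReal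
      = μ.real {ω | A ω = true ∧ Z ω = z} := by
    rw [mul_comm, measureReal_def, ← ENNReal.toReal_mul, cond_mul_eq_inter hW, inter_comm]
    rfl
  have hfalse : μ.real {ω | A ω = true ∧ Z ω = z} + μ.real {ω | A ω = false ∧ Z ω = z}
      = μ.real {ω | Z ω = z} := measureReal_true_add_false hA _
  rw [bayesErrorAt, mul_min_of_nonneg _ _ measureReal_nonneg, mul_one_sub, htrue]
  congr 1
  linarith

variable [Countable 𝒵]

lemma integrable_comp_bayesErrorAt (ν : Measure 𝒵) [IsFiniteMeasure ν] {f : ℝ → ℝ}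
    (hf : ContinuousOn f (Icc 0 (1 / 2))) : Integrable (fun z => f (bayesErrorAt μ A Z z)) ν := by
  obtain ⟨C, hC⟩ := (isCompact_Icc.image_of_continuousOn hf).isBounded.exists_norm_le
  exact .of_bound .of_discrete C
    (ae_of_all _ fun z => hC _ (mem_image_of_mem f (bayesErrorAt_mem_Icc z)))

lemma integrable_bayesErrorAt (ν : Measure 𝒵) [IsFiniteMeasure ν] :
    Integrable (bayesErrorAt μ A Z) ν :=
  integrable_comp_bayesErrorAt (f := id) ν continuousOn_id

variable [IsFiniteMeasure μ]

lemma condEnt2_eq_integral_binEnt2_bayesErrorAt (hZ : Measurable Z) :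
    condEnt2 μ A Z = ∫ z, binEnt2 (bayesErrorAt μ A Z z) ∂(μ.map Z) := by
  rw [integral_map_eq_tsum hZ (integrable_comp_bayesErrorAt _ continuous_binEnt2.continuousOn)]
  simp only [bayesErrorAt, binEnt2_min_one_sub]
  rfl

lemma condEnt2_le_binEnt2_integral_bayesErrorAt [IsProbabilityMeasure μ] (hZ : Measurable Z) :
    condEnt2 μ A Z ≤ binEnt2 (∫ z, bayesErrorAt μ A Z z ∂(μ.map Z)) := by
  have : IsProbabilityMeasure (μ.map Z) := Measure.isProbabilityMeasure_map hZ.aemeasurable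
  rw [condEnt2_eq_integral_binEnt2_bayesErrorAt hZ]
  exact concaveOn_binEnt2.le_map_integral continuous_binEnt2.continuousOn isClosed_Icc
    (ae_of_all _ fun z => Icc_subset_Icc_right (by norm_num) (bayesErrorAt_mem_Icc z))
    (integrable_bayesErrorAt _)
    (integrable_comp_bayesErrorAt _ continuous_binEnt2.continuousOn)

lemma integral_bayesErrorAt_le_measureReal_ne {Ahat : Ω → Bool} (hA : Measurable A)
    (hAhat : Measurable Ahat) (hZ : Measurable Z)
    (hcondindep : ∀ (z : 𝒵) (a b : Bool),
      μ {ω | A ω = a ∧ Ahat ω = b ∧ Z ω = z} * μ {ω | Z ω = z}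
        = μ {ω | A ω = a ∧ Z ω = z} * μ {ω | Ahat ω = b ∧ Z ω = z}) :
    ∫ z, bayesErrorAt μ A Z z ∂(μ.map Z) ≤ μ.real {ω | A ω ≠ Ahat ω} := by
  have hle : ∀ z, μ.real {ω | Z ω = z} * bayesErrorAt μ A Z z
      ≤ μ.real ({ω | A ω ≠ Ahat ω} ∩ Z ⁻¹' {z}) := fun z => by
    rw [measureReal_mul_bayesErrorAt hA hZ]
    exact min_measureReal_le_measureReal_ne_of_condIndep hA hAhat (hcondindep z)
  have herr := hasSum_measureReal_inter_preimage_singleton (μ := μ) hZ {ω | A ω ≠ Ahat ω}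
  have hsum : Summable fun z => μ.real {ω | Z ω = z} * bayesErrorAt μ A Z z :=
    herr.summable.of_nonneg_of_le
      (fun z => mul_nonneg measureReal_nonneg (bayesErrorAt_mem_Icc z).1) hle
  rw [integral_map_eq_tsum hZ (integrable_bayesErrorAt _), ← herr.tsum_eq]
  exact hsum.tsum_le_tsum hle herr.summable

end BayesError

/-- for binary `A` and any estimator `Â` conditionally independent of `A`
given `Z`, `Pr(A ≠ Â) ≥ H₂⁻¹(H(A | Z))`, where `H₂⁻¹` is the inverse of the binary
entropy function restricted to `[0, 1/2]`. -/
theorem error_ge_invBinEnt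
    {Ω 𝒵 : Type*} [MeasurableSpace Ω] [MeasurableSpace 𝒵]
    [MeasurableSingletonClass 𝒵] [Countable 𝒵]
    (μ : Measure Ω) [IsProbabilityMeasure μ]
    (A Ahat : Ω → Bool) (Z : Ω → 𝒵)
    (hA : Measurable A) (hAhat : Measurable Ahat) (hZ : Measurable Z)
    (hcondindep : ∀ (z : 𝒵) (a b : Bool),
      μ {ω | A ω = a ∧ Ahat ω = b ∧ Z ω = z} * μ {ω | Z ω = z}
        = μ {ω | A ω = a ∧ Z ω = z} * μ {ω | Ahat ω = b ∧ Z ω = z}) :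
    invBinEnt2 (condEnt2 μ A Z) ≤ (μ {ω | A ω ≠ Ahat ω}).toReal := by
  have : IsProbabilityMeasure (μ.map Z) := Measure.isProbabilityMeasure_map hZ.aemeasurable
  have hbayes : ∫ z, bayesErrorAt μ A Z z ∂(μ.map Z) ∈ Icc 0 (1 / 2) :=
    (convex_Icc _ _).integral_mem isClosed_Icc (ae_of_all _ bayesErrorAt_mem_Icc)
      (integrable_bayesErrorAt _)
  have hent : 0 ≤ condEnt2 μ A Z := by
    rw [condEnt2_eq_integral_binEnt2_bayesErrorAt hZ]
    exact integral_nonneg fun z =>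
      binEnt2_nonneg (bayesErrorAt_mem_Icc z).1 ((bayesErrorAt_mem_Icc z).2.trans (by norm_num))
  calc invBinEnt2 (condEnt2 μ A Z)
      ≤ ∫ z, bayesErrorAt μ A Z z ∂(μ.map Z) :=
        invBinEnt2_le hbayes hent (condEnt2_le_binEnt2_integral_bayesErrorAt hZ)
    _ ≤ μ.real {ω | A ω ≠ Ahat ω} :=
        integral_bayesErrorAt_le_measureReal_ne hA hAhat hZ hcondindep
end
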